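/- arXiv:1807.09826 — 4 statements merged into one kernel-verified Lean document; each statement's English description precedes it below -/
import Mathlib

section
/- Let R be a principal ideal domain, p ∈ R a prime element, and set Q := R/(p). Let F be a free R-module, U ⊆ F a submodule, and j : U → F the inclusion map. Then the induced map Q ⊗_R j : Q ⊗_R U → Q ⊗_R F is injective if and only if for every u ∈ U the following equivalence holds: u is divisible by p in U if and only if u is divisible by p in F. -/
/-!
Naturally `(R ⧸ (p)) ⊗ M ≃ M ⧸ pM`, so `Q ⊗ j` is injective iff `U ⧸ pU → F ⧸ pF` is, i.e. iff
`U ∩ pF = pU`.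
-/

open Pointwise Function

theorem Submodule.mem_smul_top_iff_exists_eq_smul {R M : Type*} [CommRing R] [AddCommGroup M]
    [Module R M] (r : R) (x : M) : x ∈ r • (⊤ : Submodule R M) ↔ ∃ y : M, x = r • y := by
  simp [mem_smul_pointwise_iff_exists, eq_comm]

namespace QuotSMulTop

variable {R M M' : Type*} [CommRing R] [AddCommGroup M] [Module R M]
  [AddCommGroup M'] [Module R M'] (r : R)

theorem lTensor_injective_iff_map_injective (f : M →ₗ[R] M') :
    Injective (f.lTensor (R ⧸ Ideal.span {r})) ↔ Injective (map r f) := by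
  have hnat := congrArg DFunLike.coe (equivQuotTensor_naturality r f)
  simp only [LinearMap.coe_comp, LinearEquiv.coe_coe] at hnat
  rw [← EquivLike.comp_injective (map r f) (equivQuotTensor r M'), hnat,
    EquivLike.injective_comp]

theorem map_subtype_injective_iff (U : Submodule R M) :
    Injective (map r U.subtype) ↔ ∀ u : U, (∃ f : M, (u : M) = r • f) → ∃ u' : U, u = r • u' := by
  simp only [injective_iff_map_eq_zero, (Submodule.Quotient.mk_surjective _).forall,
    map_apply_mk, Submodule.Quotient.mk_eq_zero, Submodule.mem_smul_top_iff_exists_eq_smul,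
    Submodule.subtype_apply]

end QuotSMulTop

theorem stmt_0_general {R F : Type*} [CommRing R] [AddCommGroup F] [Module R F] {p : R}
    (U : Submodule R F) :
    Function.Injective
      (LinearMap.lTensor (R ⧸ Ideal.span {p}) U.subtype) ↔
    ∀ u : U, (∃ u' : U, u = p • u') ↔ (∃ f : F, (u : F) = p • f) := by
  rw [QuotSMulTop.lTensor_injective_iff_map_injective, QuotSMulTop.map_subtype_injective_iff]
  refine forall_congr' fun u => ⟨fun hdiv => ⟨?_, hdiv⟩, fun h => h.2⟩
  rintro ⟨u', rfl⟩
  exact ⟨u', by simp⟩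

/-- For a PID `R`, a prime `p ∈ R`, `Q := R/(p)`, a free `R`-module `F` and a
submodule `U ⊆ F` with inclusion `j : U → F`, the map `Q ⊗ j : Q ⊗[R] U → Q ⊗[R] F` is
injective iff for every `u ∈ U`: `u` is divisible by `p` in `U` iff `u` is divisible by `p`
in `F`. -/
theorem stmt_0 {R F : Type*} [CommRing R] [IsDomain R] [IsPrincipalIdealRing R]
    [AddCommGroup F] [Module R F] [Module.Free R F]
    {p : R} (hp : Prime p) (U : Submodule R F) :
    Function.Injective
      (LinearMap.lTensor (R ⧸ Ideal.span {p}) U.subtype) ↔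
    ∀ u : U, (∃ u' : U, u = p • u') ↔ (∃ f : F, (u : F) = p • f) :=
  stmt_0_general U
end

section
/- Let R be a principal ideal domain, p ∈ R a prime element, and set Q := R/(p). Let F be a free R-module, U ⊆ F a submodule, and j : U → F the inclusion map. Then the induced map Q ⊗_R j : Q ⊗_R U → Q ⊗_R F is injective if and only if for every f ∈ F with p•f ∈ U one has f ∈ U (equivalently, the quotient module F/U has no nonzero element annihilated by p). -/
open Function Pointwise

/-!
Via `Q ⊗[R] M ≃ M ⧸ pM`, the map `Q ⊗ j` becomes `U ⧸ pU → F ⧸ pF`, which is injective iff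
`pF ∩ U = pU`. Since `p` is a nonzerodivisor on the free module `F`, an equation `p • f = p • u`
forces `f = u`, so this says precisely that `p • f ∈ U` implies `f ∈ U`.
-/

section

variable {R M M' : Type*} [CommRing R] [AddCommGroup M] [Module R M]
  [AddCommGroup M'] [Module R M']

theorem LinearMap.lTensor_quotient_span_singleton_injective_iff (r : R) (f : M →ₗ[R] M') :
    Injective (f.lTensor (R ⧸ Ideal.span {r})) ↔ Injective (QuotSMulTop.map r f) := by
  have hnat := congrArg DFunLike.coe (QuotSMulTop.equivQuotTensor_naturality r f)
  simp only [LinearMap.coe_comp, LinearEquiv.coe_coe] at hnat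
  rw [← EquivLike.injective_comp (QuotSMulTop.equivQuotTensor r M), ← hnat,
    EquivLike.comp_injective]

theorem QuotSMulTop.map_subtype_injective_iff_s2 {r : R} (hr : IsSMulRegular M r)
    (U : Submodule R M) :
    Injective (QuotSMulTop.map r U.subtype) ↔ ∀ x : M, r • x ∈ U → x ∈ U := by
  simp only [injective_iff_map_eq_zero, (Submodule.mkQ_surjective _).forall, Submodule.mkQ_apply,
    map_apply_mk, Submodule.subtype_apply, Submodule.Quotient.mk_eq_zero,
    Submodule.mem_smul_pointwise_iff_exists, Submodule.mem_top, true_and]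
  constructor
  · intro h x hx
    obtain ⟨u, hu⟩ := h ⟨r • x, hx⟩ ⟨x, rfl⟩
    rw [hr (congrArg Subtype.val hu).symm]
    exact u.2
  · rintro h u ⟨x, hx⟩
    exact ⟨⟨x, h x (hx ▸ u.2)⟩, Subtype.ext hx⟩

end

theorem stmt_2_general {R F : Type*} [CommRing R] [IsDomain R]
    [AddCommGroup F] [Module R F] [Module.Free R F]
    {p : R} (hp : Prime p) (U : Submodule R F) :
    Function.Injective
      (LinearMap.lTensor (R ⧸ Ideal.span {p}) U.subtype) ↔
    ∀ f : F, p • f ∈ U → f ∈ U := by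
  rw [LinearMap.lTensor_quotient_span_singleton_injective_iff,
    QuotSMulTop.map_subtype_injective_iff_s2 (IsSMulRegular.of_ne_zero hp.ne_zero)]

/-- For a PID `R`, a prime `p ∈ R`, `Q := R/(p)`, a free `R`-module `F` and a
submodule `U ⊆ F` with inclusion `j : U → F`, the map `Q ⊗ j : Q ⊗[R] U → Q ⊗[R] F` is
injective iff every `f ∈ F` with `p • f ∈ U` satisfies `f ∈ U` (i.e. `F/U` has no nonzero
element annihilated by `p`). -/
theorem stmt_2 {R F : Type*} [CommRing R] [IsDomain R] [IsPrincipalIdealRing R]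
    [AddCommGroup F] [Module R F] [Module.Free R F]
    {p : R} (hp : Prime p) (U : Submodule R F) :
    Function.Injective
      (LinearMap.lTensor (R ⧸ Ideal.span {p}) U.subtype) ↔
    ∀ f : F, p • f ∈ U → f ∈ U :=
  stmt_2_general hp U
end

section
/- Let R be a principal ideal domain, p ∈ R a prime element, and set Q := R/(p). Let F be a free R-module, I a nonempty index set with a distinguished element i₀, and (A_i)_{i ∈ I} a family of submodules of F such that for every j ∈ I one has (p•A_{i₀}) ∩ A_j = A_{i₀} ∩ (p•A_j). Set U := ⋂_{i ∈ I} A_i, so U ⊆ A_{i₀}. Then the map Q ⊗_R U → Q ⊗_R A_{i₀} induced by tensoring the inclusion U → A_{i₀} with Q is injective. -/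
open Pointwise

/-!
Since `(R ⧸ (p)) ⊗ M ≃ M ⧸ pM` naturally in `M`, injectivity reduces to `U ⊓ p • A i₀ ≤ p • U`.
An element of `U ⊓ p • A i₀` lies in `p • A i₀ ⊓ A j = A i₀ ⊓ p • A j` for every `j`, and as
multiplication by `p ≠ 0` is injective on the torsion-free module `F`, `⨅ j, p • A j = p • U`.
-/

open Submodule in
theorem TensorProduct.quotTensorEquivQuotSMul_comp_lTensor {R M N : Type*} [CommRing R]
    [AddCommGroup M] [Module R M] [AddCommGroup N] [Module R N] (I : Ideal R) (f : M →ₗ[R] N) :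
    quotTensorEquivQuotSMul N I ∘ₗ f.lTensor (R ⧸ I) =
      mapQ _ _ f (smul_top_le_comap_smul_top I f) ∘ₗ quotTensorEquivQuotSMul M I := by
  refine TensorProduct.ext' fun q x => ?_
  obtain ⟨r, rfl⟩ := Ideal.Quotient.mk_surjective q
  simp

open Submodule in
theorem LinearMap.lTensor_quotient_injective_of_comap_le {R M N : Type*} [CommRing R]
    [AddCommGroup M] [Module R M] [AddCommGroup N] [Module R N] (I : Ideal R) (f : M →ₗ[R] N)
    (hf : (I • ⊤ : Submodule R N).comap f ≤ I • ⊤) :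
    Function.Injective (f.lTensor (R ⧸ I)) := by
  have hmapQ : Function.Injective (mapQ _ _ f (smul_top_le_comap_smul_top I f)) := by
    rwa [← LinearMap.ker_eq_bot, ker_mapQ, ← le_ker_iff_map, ker_mkQ]
  have hcomp := congrArg DFunLike.coe (TensorProduct.quotTensorEquivQuotSMul_comp_lTensor I f)
  rw [coe_comp, coe_comp, LinearEquiv.coe_coe, LinearEquiv.coe_coe] at hcomp
  exact .of_comp (hcomp ▸ hmapQ.comp (LinearEquiv.injective _))

namespace Submodule

theorem lTensor_quotient_span_singleton_inclusion_injective {R F : Type*} [CommRing R]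
    [AddCommGroup F] [Module R F] {N M : Submodule R F} (hNM : N ≤ M) (p : R)
    (h : N ⊓ p • M ≤ p • N) :
    Function.Injective ((inclusion hNM).lTensor (R ⧸ Ideal.span {p})) := by
  refine LinearMap.lTensor_quotient_injective_of_comap_le _ _ fun x hx => ?_
  rw [mem_comap, ideal_span_singleton_smul] at hx
  rw [ideal_span_singleton_smul]
  obtain ⟨a, -, ha⟩ := (mem_smul_pointwise_iff_exists _ _ _).mp hx
  have hxF : (x : F) ∈ N ⊓ p • M :=
    ⟨x.2, congrArg Subtype.val ha ▸ smul_mem_pointwise_smul _ p M a.2⟩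
  obtain ⟨b, hb, hbx⟩ := (mem_smul_pointwise_iff_exists _ _ _).mp (h hxF)
  have hx_eq : p • (⟨b, hb⟩ : N) = x := Subtype.ext hbx
  exact hx_eq ▸ smul_mem_pointwise_smul _ p ⊤ trivial

theorem smul_iInf_of_ne_zero {R M ι : Type*} [CommSemiring R] [IsCancelMulZero R]
    [AddCommMonoid M] [Module R M] [Module.IsTorsionFree R M] [Nonempty ι] {p : R} (hp : p ≠ 0)
    (A : ι → Submodule R M) :
    p • ⨅ i, A i = ⨅ i, p • A i := by
  refine le_antisymm (le_iInf fun i => smul_mono_right p (iInf_le A i)) fun x hx => ?_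
  obtain ⟨i₀⟩ := ‹Nonempty ι›
  obtain ⟨a, -, rfl⟩ := (mem_smul_pointwise_iff_exists _ _ _).mp ((mem_iInf _).mp hx i₀)
  refine smul_mem_pointwise_smul _ _ _ ((mem_iInf _).mpr fun j => ?_)
  obtain ⟨b, hb, hba⟩ := (mem_smul_pointwise_iff_exists _ _ _).mp ((mem_iInf _).mp hx j)
  rwa [← smul_right_injective M hp hba]

end Submodule

theorem stmt_4_general {R F : Type*} [CommRing R] [IsDomain R]
    [AddCommGroup F] [Module R F] [Module.Free R F]
    {p : R} (hp : Prime p) {I : Type*} (i₀ : I) (A : I → Submodule R F)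
    (h : ∀ j : I, (p • A i₀) ⊓ A j = A i₀ ⊓ (p • A j)) :
    Function.Injective
      (LinearMap.lTensor (R ⧸ Ideal.span {p})
        (Submodule.inclusion (iInf_le A i₀ : (⨅ i, A i) ≤ A i₀))) := by
  have : Nonempty I := ⟨i₀⟩
  refine Submodule.lTensor_quotient_span_singleton_inclusion_injective _ p ?_
  rw [Submodule.smul_iInf_of_ne_zero hp.ne_zero]
  rintro x ⟨hxU, hx₀⟩
  refine (Submodule.mem_iInf _).mpr fun j => ?_
  have hxj : x ∈ p • A i₀ ⊓ A j := ⟨hx₀, (Submodule.mem_iInf _).mp hxU j⟩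
  exact (h j ▸ hxj).2

/-- Let `R` be a PID, `p ∈ R` prime, `Q := R/(p)`, `F` a free `R`-module, `I` an
index set with a distinguished element `i₀`, and `(A i)_{i ∈ I}` a family of submodules of `F`
with `(p • A i₀) ⊓ A j = A i₀ ⊓ (p • A j)` for all `j`. Set `U := ⨅ i, A i ⊆ A i₀`. Then the
map `Q ⊗[R] U → Q ⊗[R] A i₀` induced by the inclusion is injective. -/
theorem stmt_4 {R F : Type*} [CommRing R] [IsDomain R] [IsPrincipalIdealRing R]
    [AddCommGroup F] [Module R F] [Module.Free R F]
    {p : R} (hp : Prime p) {I : Type*} (i₀ : I) (A : I → Submodule R F)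
    (h : ∀ j : I, (p • A i₀) ⊓ A j = A i₀ ⊓ (p • A j)) :
    Function.Injective
      (LinearMap.lTensor (R ⧸ Ideal.span {p})
        (Submodule.inclusion (iInf_le A i₀ : (⨅ i, A i) ≤ A i₀))) :=
  stmt_4_general hp i₀ A h
end

section
/- Let R be a principal ideal domain, p ∈ R a prime element, and set Q := R/(p). Let B be a free R-module and A ⊆ B a submodule. Suppose the quotient module N := B/A is an internal direct sum N = ⊕_{g ∈ G} N_g (over an arbitrary index set G) of finitely generated submodules N_g, and that p•N = N. Then the map Q ⊗_R A → Q ⊗_R B induced by tensoring the inclusion A → B with Q is bijective. -/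
/-!
Multiplication by `p` is surjective on `N = B ⧸ A`, hence on each finitely generated summand
`N g`, where it is then injective (a surjective endomorphism of a finite module is bijective).
So `p` is `N`-regular. Reducing `0 → A → B → N → 0` modulo `p` (i.e. applying `Q ⊗ -`) is right
exact, and `N ⧸ pN = 0` gives surjectivity of `A ⧸ pA → B ⧸ pB`; regularity of `p` on `N`
(the vanishing of `Tor₁(Q, N)`) gives injectivity.
-/

open Pointwise Function

section SMulTop

variable {R M : Type*} [CommRing R] [AddCommGroup M] [Module R M]

theorem Submodule.smul_top_eq_top_iff_surjective {r : R} :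
    r • (⊤ : Submodule R M) = ⊤ ↔ Surjective (r • · : M → M) := by
  rw [← SetLike.coe_set_eq, Submodule.coe_pointwise_smul, Submodule.top_coe,
    ← Set.image_smul, Set.image_univ, Set.range_eq_univ]

theorem Module.Finite.isSMulRegular_of_surjective_smul [Module.Finite R M] {r : R}
    (h : Surjective (r • · : M → M)) : IsSMulRegular M r :=
  OrzechProperty.injective_of_surjective_endomorphism (LinearMap.lsmul R M r) h

end SMulTop

section DirectSum

open scoped DirectSum

variable {R ι : Type*} [CommRing R]

theorem DirectSum.isSMulRegular_of_surjective_smul {M : ι → Type*}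
    [∀ i, AddCommGroup (M i)] [∀ i, Module R (M i)] [∀ i, Module.Finite R (M i)] {r : R}
    (h : Surjective (r • · : (⨁ i, M i) → ⨁ i, M i)) : IsSMulRegular (⨁ i, M i) r := by
  have hlmap : ⇑(DirectSum.lmap fun i ↦ LinearMap.lsmul R (M i) r) = (r • ·) := rfl
  rw [← hlmap, DirectSum.lmap_surjective] at h
  rw [IsSMulRegular, ← hlmap, DirectSum.lmap_injective]
  exact fun i ↦ Module.Finite.isSMulRegular_of_surjective_smul (h i)

theorem DirectSum.IsInternal.isSMulRegular_of_smul_top_eq_top [DecidableEq ι]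
    {M : Type*} [AddCommGroup M] [Module R M] {N : ι → Submodule R M}
    (hN : DirectSum.IsInternal N) (hfg : ∀ i, (N i).FG) {r : R}
    (hr : r • (⊤ : Submodule R M) = ⊤) : IsSMulRegular M r := by
  have : ∀ i, Module.Finite R (N i) := fun i ↦ Module.Finite.iff_fg.mpr (hfg i)
  let e := LinearEquiv.ofBijective (DirectSum.coeLinearMap N) hN
  refine (e.isSMulRegular_congr r).mp (DirectSum.isSMulRegular_of_surjective_smul fun x ↦ ?_)
  obtain ⟨m, hm⟩ := Submodule.smul_top_eq_top_iff_surjective.mp hr (e x)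
  exact ⟨e.symm m, by simp [← map_smul, hm]⟩

end DirectSum

section Tensor

variable {R M M' : Type*} [CommRing R] [AddCommGroup M] [Module R M]
  [AddCommGroup M'] [Module R M']

theorem LinearMap.lTensor_quotient_span_singleton_bijective_iff (r : R) (f : M →ₗ[R] M') :
    Bijective (f.lTensor (R ⧸ Ideal.span {r})) ↔ Bijective (QuotSMulTop.map r f) := by
  have h := congrArg DFunLike.coe (QuotSMulTop.equivQuotTensor_naturality r f)
  simp only [LinearMap.coe_comp, LinearEquiv.coe_coe] at h
  rw [← EquivLike.bijective_comp (QuotSMulTop.equivQuotTensor r M), ← h,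
    EquivLike.comp_bijective]

theorem Submodule.quotSMulTop_map_subtype_bijective {A : Submodule R M} {r : R}
    (hreg : IsSMulRegular (M ⧸ A) r) (htop : r • (⊤ : Submodule R (M ⧸ A)) = ⊤) :
    Bijective (QuotSMulTop.map r A.subtype) := by
  constructor
  · rw [← LinearMap.exact_zero_iff_injective PUnit]
    convert QuotSMulTop.map_first_exact_on_four_term_exact_of_isSMulRegular_last
      ((LinearMap.exact_zero_iff_injective PUnit _).mpr A.injective_subtype)
      (LinearMap.exact_subtype_mkQ A) hreg using 2
    simp
  · have : Subsingleton (QuotSMulTop r (M ⧸ A)) := by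
      rw [QuotSMulTop, htop]; infer_instance
    have hzero : QuotSMulTop.map r A.mkQ = 0 := LinearMap.ext fun _ ↦ Subsingleton.elim _ _
    rw [← LinearMap.exact_zero_iff_surjective (QuotSMulTop r (M ⧸ A)), ← hzero]
    exact QuotSMulTop.map_exact r (LinearMap.exact_subtype_mkQ A) A.mkQ_surjective

end Tensor

theorem stmt_5_general {R B : Type*} [CommRing R]
    [AddCommGroup B] [Module R B]
    {p : R} (A : Submodule R B)
    {G : Type*} [DecidableEq G] (N : G → Submodule R (B ⧸ A))
    (hint : DirectSum.IsInternal N) (hfg : ∀ g, (N g).FG)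
    (hpN : p • (⊤ : Submodule R (B ⧸ A)) = ⊤) :
    Function.Bijective
      (LinearMap.lTensor (R ⧸ Ideal.span {p}) A.subtype) :=
  (A.subtype.lTensor_quotient_span_singleton_bijective_iff p).mpr <|
    A.quotSMulTop_map_subtype_bijective (hint.isSMulRegular_of_smul_top_eq_top hfg hpN) hpN

/-- Let `R` be a PID, `p ∈ R` prime, `Q := R/(p)`, `B` a free `R`-module, and
`A ⊆ B` a submodule. Suppose the quotient `N := B/A` is the internal direct sum of a family
of finitely generated submodules `(N g)_{g ∈ G}` and that `p • N = N`. Then the map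
`Q ⊗[R] A → Q ⊗[R] B` induced by the inclusion `A → B` is bijective. -/
theorem stmt_5 {R B : Type*} [CommRing R] [IsDomain R] [IsPrincipalIdealRing R]
    [AddCommGroup B] [Module R B] [Module.Free R B]
    {p : R} (hp : Prime p) (A : Submodule R B)
    {G : Type*} [DecidableEq G] (N : G → Submodule R (B ⧸ A))
    (hint : DirectSum.IsInternal N) (hfg : ∀ g, (N g).FG)
    (hpN : p • (⊤ : Submodule R (B ⧸ A)) = ⊤) :
    Function.Bijective
      (LinearMap.lTensor (R ⧸ Ideal.span {p}) A.subtype) :=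
  stmt_5_general A N hint hfg hpN
end
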